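/- arXiv:2004.01627 — 9 statements merged into one kernel-verified Lean document; each statement's English description precedes it below -/
import Mathlib

section
/- The entropy function U is strictly convex on the set of admissible states of the 2D compressible Euler equations, i.e., the map q ↦ U(q) is strictly convex on the open set {q = (ρ, m₁, m₂, E) ∈ ℝ⁴ : ρ > 0 and (γ−1)(E − (m₁²+m₂²)/(2ρ)) > 0}. -/
open Real Matrix

noncomputable section

/-- A state of the 2D compressible Euler equations: `(ρ, ρu, ρv, E)`. -/
abbrev EulerState := Fin 4 → ℝ

/-- Density. -/
def rho (q : EulerState) : ℝ := q 0
/-- x-momentum. -/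
def mom1 (q : EulerState) : ℝ := q 1
/-- y-momentum. -/
def mom2 (q : EulerState) : ℝ := q 2
/-- Total energy. -/
def toten (q : EulerState) : ℝ := q 3
/-- Pressure `p = (γ-1)(E - (m₁² + m₂²)/(2ρ))`. -/
def pres (γ : ℝ) (q : EulerState) : ℝ :=
  (γ - 1) * (toten q - (mom1 q ^ 2 + mom2 q ^ 2) / (2 * rho q))
/-- x-velocity `u = m₁/ρ`. -/
def uvel (q : EulerState) : ℝ := mom1 q / rho q
/-- y-velocity `v = m₂/ρ`. -/
def vvel (q : EulerState) : ℝ := mom2 q / rho q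
/-- Admissible states: positive density and positive pressure. -/
def admissible (γ : ℝ) (q : EulerState) : Prop := 0 < rho q ∧ 0 < pres γ q
/-- Physical entropy `s = ln(p ρ^(-γ))`. -/
def entS (γ : ℝ) (q : EulerState) : ℝ := Real.log (pres γ q * rho q ^ (-γ))
/-- Entropy function `U = -ρ s/(γ-1)`. -/
def entU (γ : ℝ) (q : EulerState) : ℝ := -(rho q * entS γ q) / (γ - 1)
/-- `β = ρ/(2p)`. -/
def betaCoef (γ : ℝ) (q : EulerState) : ℝ := rho q / (2 * pres γ q)
/-- Entropy variables `r(q)`. -/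
def entVar (γ : ℝ) (q : EulerState) : EulerState :=
  ![(γ - entS γ q) / (γ - 1) - betaCoef γ q * (uvel q ^ 2 + vvel q ^ 2),
    2 * betaCoef γ q * uvel q,
    2 * betaCoef γ q * vvel q,
    -2 * betaCoef γ q]
/-- x-flux `f(q)`. -/
def fFlux (γ : ℝ) (q : EulerState) : EulerState :=
  ![rho q * uvel q,
    rho q * uvel q ^ 2 + pres γ q,
    rho q * uvel q * vvel q,
    (toten q + pres γ q) * uvel q]
/-- y-flux `g(q)`. -/
def gFlux (γ : ℝ) (q : EulerState) : EulerState :=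
  ![rho q * vvel q,
    rho q * uvel q * vvel q,
    rho q * vvel q ^ 2 + pres γ q,
    (toten q + pres γ q) * vvel q]
/-- x-entropy flux `φₓ = -ρ u s/(γ-1)`. -/
def phiX (γ : ℝ) (q : EulerState) : ℝ := -(rho q * uvel q * entS γ q) / (γ - 1)
/-- y-entropy flux `φ_y = -ρ v s/(γ-1)`. -/
def phiY (γ : ℝ) (q : EulerState) : ℝ := -(rho q * vvel q * entS γ q) / (γ - 1)

/-- Logarithmic mean `(b-a)/(ln b - ln a)`, equal to `a` when `a = b`. -/
def logMean (a b : ℝ) : ℝ := if a = b then a else (b - a) / (Real.log b - Real.log a)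

/-- The entropy conservative flux of Chandrashekar. -/
def chandrashekarFlux (γ : ℝ) (qm qp : EulerState) : EulerState :=
  let ρhat := logMean (rho qm) (rho qp)
  let ubar := (uvel qm + uvel qp) / 2
  let vbar := (vvel qm + vvel qp) / 2
  let βbar := (betaCoef γ qm + betaCoef γ qp) / 2
  let βhat := logMean (betaCoef γ qm) (betaCoef γ qp)
  let ρbar := (rho qm + rho qp) / 2
  let ptil := ρbar / (2 * βbar)
  let vsqbar := (uvel qm ^ 2 + vvel qm ^ 2 + uvel qp ^ 2 + vvel qp ^ 2) / 2
  let Fρ := ρhat * ubar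
  let Fρu := ubar * Fρ + ptil
  let Fρv := vbar * Fρ
  ![Fρ, Fρu, Fρv,
    (1 / (2 * (γ - 1) * βhat) - vsqbar / 2) * Fρ + ubar * Fρu + vbar * Fρv]

/-- Speed of sound `c = √(γ p/ρ)`. -/
def cSound (γ : ℝ) (q : EulerState) : ℝ := Real.sqrt (γ * pres γ q / rho q)
/-- Enthalpy `H = c²/(γ-1) + |v|²/2`. -/
def enthalpyH (γ : ℝ) (q : EulerState) : ℝ :=
  cSound γ q ^ 2 / (γ - 1) + (uvel q ^ 2 + vvel q ^ 2) / 2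
/-- The matrix `R` of right eigenvectors of the x-flux Jacobian. -/
def eigMat (γ : ℝ) (q : EulerState) : Matrix (Fin 4) (Fin 4) ℝ :=
  !![1, 1, 0, 1;
     uvel q - cSound γ q, uvel q, 0, uvel q + cSound γ q;
     vvel q, vvel q, -1, vvel q;
     enthalpyH γ q - cSound γ q * uvel q, (uvel q ^ 2 + vvel q ^ 2) / 2, -vvel q,
       enthalpyH γ q + cSound γ q * uvel q]
/-- Barth's scaling matrix `S = diag(ρ/(2γ), (γ-1)ρ/γ, p, ρ/(2γ))`. -/
def scalMat (γ : ℝ) (q : EulerState) : Matrix (Fin 4) (Fin 4) ℝ :=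
  Matrix.diagonal ![rho q / (2 * γ), (γ - 1) * rho q / γ, pres γ q, rho q / (2 * γ)]

/-- Entropy diffusion matrix `Q = R |Λ| S Rᵀ` for a diagonal `|Λ| = diag lam`. -/
def Qmat (γ : ℝ) (lam : Fin 4 → ℝ) (q : EulerState) : Matrix (Fin 4) (Fin 4) ℝ :=
  eigMat γ q * Matrix.diagonal lam * scalMat γ q * (eigMat γ q)ᵀ

/-- Roe eigenvalues `(|u-c|, |u|, |u|, |u+c|)`. -/
def lamRoe (γ : ℝ) (q : EulerState) : Fin 4 → ℝ :=
  ![|uvel q - cSound γ q|, |uvel q|, |uvel q|, |uvel q + cSound γ q|]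
/-- Kinetic energy stable eigenvalues `(|u|+c, |u|, |u|, |u|+c)`. -/
def lamKES (γ : ℝ) (q : EulerState) : Fin 4 → ℝ :=
  ![|uvel q| + cSound γ q, |uvel q|, |uvel q|, |uvel q| + cSound γ q]
/-- Local Mach number `M = |v|/c`. -/
def machNum (γ : ℝ) (q : EulerState) : ℝ :=
  Real.sqrt (uvel q ^ 2 + vvel q ^ 2) / cSound γ q
/-- Rescaled speed of sound `c̃ = c max(min(M,1), M_cut)`. -/
def cTilde (γ Mcut : ℝ) (q : EulerState) : ℝ :=
  cSound γ q * max (min (machNum γ q) 1) Mcut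
/-- Low Mach Roe eigenvalues `(|u-c̃|, |u|, |u|, |u+c̃|)`. -/
def lamRoeLM (γ Mcut : ℝ) (q : EulerState) : Fin 4 → ℝ :=
  ![|uvel q - cTilde γ Mcut q|, |uvel q|, |uvel q|, |uvel q + cTilde γ Mcut q|]
/-- Low Mach KES eigenvalues `(|u|+c̃, |u|, |u|, |u|+c̃)`. -/
def lamKESLM (γ Mcut : ℝ) (q : EulerState) : Fin 4 → ℝ :=
  ![|uvel q| + cTilde γ Mcut q, |uvel q|, |uvel q|, |uvel q| + cTilde γ Mcut q]

/-
On admissible states `(γ - 1) U = ρ · (-log (p / ρ)) + (γ - 1) ρ log ρ`. The maps `t ↦ -log t`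
and `t ↦ t ^ 2` are strictly convex, so their perspectives `(x, t) ↦ t f (x / t)` are jointly
convex: this makes the kinetic energy `|m|² / (2ρ)` convex, hence the pressure concave, and makes
`ρ · (-log (p / ρ))` jointly convex in `(ρ, p)` and decreasing in `p`. Strictness: a difference in
`ρ` is seen by `ρ log ρ`, a difference in `p / ρ` by the perspective of `-log`, and two states with
the same `ρ` and `p` but different momenta make the pressure strictly concave on the segment
joining them.
-/

section Perspective

variable {E : Type*} [AddCommGroup E] [Module ℝ E] {s : Set E} {f : E → ℝ}
  {x₁ x₂ : E} {t₁ t₂ a b : ℝ}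

lemma perspective_weights (ht₁ : 0 < t₁) (ht₂ : 0 < t₂) (hT : 0 < a * t₁ + b * t₂) :
    (a * t₁ / (a * t₁ + b * t₂)) • t₁⁻¹ • x₁ + (b * t₂ / (a * t₁ + b * t₂)) • t₂⁻¹ • x₂
        = (a * t₁ + b * t₂)⁻¹ • (a • x₁ + b • x₂) ∧
      a * t₁ / (a * t₁ + b * t₂) + b * t₂ / (a * t₁ + b * t₂) = 1 := by
  refine ⟨?_, by rw [← add_div, div_self hT.ne']⟩
  rw [smul_add, smul_smul, smul_smul, smul_smul, smul_smul]
  congr 2 <;> field_simp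

theorem ConvexOn.perspective_le (hf : ConvexOn ℝ s f) (ht₁ : 0 < t₁) (ht₂ : 0 < t₂)
    (hx₁ : t₁⁻¹ • x₁ ∈ s) (hx₂ : t₂⁻¹ • x₂ ∈ s) (ha : 0 ≤ a) (hb : 0 ≤ b) (hab : a + b = 1) :
    (a * t₁ + b * t₂) * f ((a * t₁ + b * t₂)⁻¹ • (a • x₁ + b • x₂))
      ≤ a * (t₁ * f (t₁⁻¹ • x₁)) + b * (t₂ * f (t₂⁻¹ • x₂)) := by
  have hT : 0 < a * t₁ + b * t₂ := convex_Ioi (0 : ℝ) ht₁ ht₂ ha hb hab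
  obtain ⟨hpt, hsum⟩ := perspective_weights (x₁ := x₁) (x₂ := x₂) ht₁ ht₂ hT
  have h := hf.2 hx₁ hx₂ (by positivity) (by positivity) hsum
  rw [hpt, smul_eq_mul, smul_eq_mul] at h
  calc _ ≤ (a * t₁ + b * t₂) * (a * t₁ / (a * t₁ + b * t₂) * f (t₁⁻¹ • x₁)
          + b * t₂ / (a * t₁ + b * t₂) * f (t₂⁻¹ • x₂)) := mul_le_mul_of_nonneg_left h hT.le
    _ = _ := by field_simp

theorem StrictConvexOn.perspective_lt (hf : StrictConvexOn ℝ s f) (ht₁ : 0 < t₁) (ht₂ : 0 < t₂)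
    (hx₁ : t₁⁻¹ • x₁ ∈ s) (hx₂ : t₂⁻¹ • x₂ ∈ s) (hne : t₁⁻¹ • x₁ ≠ t₂⁻¹ • x₂)
    (ha : 0 < a) (hb : 0 < b) (hab : a + b = 1) :
    (a * t₁ + b * t₂) * f ((a * t₁ + b * t₂)⁻¹ • (a • x₁ + b • x₂))
      < a * (t₁ * f (t₁⁻¹ • x₁)) + b * (t₂ * f (t₂⁻¹ • x₂)) := by
  have hT : 0 < a * t₁ + b * t₂ := convex_Ioi (0 : ℝ) ht₁ ht₂ ha.le hb.le hab
  obtain ⟨hpt, hsum⟩ := perspective_weights (x₁ := x₁) (x₂ := x₂) ht₁ ht₂ hT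
  have h := hf.2 hx₁ hx₂ hne (by positivity) (by positivity) hsum
  rw [hpt, smul_eq_mul, smul_eq_mul] at h
  calc _ < (a * t₁ + b * t₂) * (a * t₁ / (a * t₁ + b * t₂) * f (t₁⁻¹ • x₁)
          + b * t₂ / (a * t₁ + b * t₂) * f (t₂⁻¹ • x₂)) := mul_lt_mul_of_pos_left h hT
    _ = _ := by field_simp

end Perspective

lemma sq_div_combo_le {m₁ m₂ r₁ r₂ a b : ℝ} (hr₁ : 0 < r₁) (hr₂ : 0 < r₂) (ha : 0 ≤ a)
    (hb : 0 ≤ b) (hab : a + b = 1) :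
    (a * m₁ + b * m₂) ^ 2 / (a * r₁ + b * r₂) ≤ a * (m₁ ^ 2 / r₁) + b * (m₂ ^ 2 / r₂) := by
  have h := (Even.strictConvexOn_pow even_two two_ne_zero).convexOn.perspective_le
    (x₁ := m₁) (x₂ := m₂) hr₁ hr₂ trivial trivial ha hb hab
  simp only [smul_eq_mul] at h
  field_simp at h ⊢
  exact h

lemma sq_div_combo_lt {m₁ m₂ r₁ r₂ a b : ℝ} (hr₁ : 0 < r₁) (hr₂ : 0 < r₂)
    (hne : m₁ / r₁ ≠ m₂ / r₂) (ha : 0 < a) (hb : 0 < b) (hab : a + b = 1) :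
    (a * m₁ + b * m₂) ^ 2 / (a * r₁ + b * r₂) < a * (m₁ ^ 2 / r₁) + b * (m₂ ^ 2 / r₂) := by
  rw [div_eq_inv_mul, div_eq_inv_mul] at hne
  have h := (Even.strictConvexOn_pow even_two two_ne_zero).perspective_lt
    (x₁ := m₁) (x₂ := m₂) hr₁ hr₂ trivial trivial hne ha hb hab
  simp only [smul_eq_mul] at h
  field_simp at h ⊢
  exact h

def kinEnergy (q : EulerState) : ℝ := (mom1 q ^ 2 + mom2 q ^ 2) / (2 * rho q)

lemma kinEnergy_eq (q : EulerState) :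
    kinEnergy q = (mom1 q ^ 2 / rho q + mom2 q ^ 2 / rho q) / 2 := by
  rw [kinEnergy, ← add_div, div_div, mul_comm]

lemma pres_eq_sub_kinEnergy (γ : ℝ) (q : EulerState) :
    pres γ q = (γ - 1) * (toten q - kinEnergy q) := rfl

lemma convex_rho_pos : Convex ℝ {q : EulerState | 0 < rho q} :=
  convex_halfSpace_gt ⟨fun _ _ => rfl, fun _ _ => rfl⟩ 0

theorem convexOn_kinEnergy : ConvexOn ℝ {q : EulerState | 0 < rho q} kinEnergy := by
  refine ⟨convex_rho_pos, fun x hx y hy a b ha hb hab => ?_⟩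
  have h₁ := sq_div_combo_le (m₁ := mom1 x) (m₂ := mom1 y) hx hy ha hb hab
  have h₂ := sq_div_combo_le (m₁ := mom2 x) (m₂ := mom2 y) hx hy ha hb hab
  simp only [kinEnergy_eq, smul_eq_mul]
  unfold rho mom1 mom2 at *
  simp only [Pi.add_apply, Pi.smul_apply, smul_eq_mul]
  linarith

lemma kinEnergy_combo_lt {x y : EulerState} {a b : ℝ} (hx : 0 < rho x) (hρ : rho x = rho y)
    (hm : mom1 x ≠ mom1 y ∨ mom2 x ≠ mom2 y) (ha : 0 < a) (hb : 0 < b) (hab : a + b = 1) :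
    kinEnergy (a • x + b • y) < a * kinEnergy x + b * kinEnergy y := by
  have hy : 0 < rho y := hρ ▸ hx
  have hne : ∀ {m₁ m₂ : ℝ}, m₁ ≠ m₂ → m₁ / rho x ≠ m₂ / rho y := fun h => by
    rwa [← hρ, Ne, div_left_inj' hx.ne']
  have key : ∀ {m₁ m₂ n₁ n₂ : ℝ}, m₁ ≠ m₂ →
      (a * m₁ + b * m₂) ^ 2 / (a * rho x + b * rho y)
          + (a * n₁ + b * n₂) ^ 2 / (a * rho x + b * rho y)
        < a * (m₁ ^ 2 / rho x) + b * (m₂ ^ 2 / rho y)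
          + (a * (n₁ ^ 2 / rho x) + b * (n₂ ^ 2 / rho y)) :=
    fun h => add_lt_add_of_lt_of_le (sq_div_combo_lt hx hy (hne h) ha hb hab)
      (sq_div_combo_le hx hy ha.le hb.le hab)
  simp only [kinEnergy_eq]
  unfold rho mom1 mom2 at *
  simp only [Pi.add_apply, Pi.smul_apply, smul_eq_mul]
  rcases hm with h | h
  · linarith [key (n₁ := x 2) (n₂ := y 2) h]
  · linarith [key (n₁ := x 1) (n₂ := y 1) h]

lemma pres_combo_sub (γ : ℝ) (x y : EulerState) (a b : ℝ) :
    pres γ (a • x + b • y) - (a * pres γ x + b * pres γ y)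
      = (γ - 1) * (a * kinEnergy x + b * kinEnergy y - kinEnergy (a • x + b • y)) := by
  simp only [pres_eq_sub_kinEnergy]
  unfold toten
  simp only [Pi.add_apply, Pi.smul_apply, smul_eq_mul]
  ring

theorem concaveOn_pres {γ : ℝ} (hγ : 1 ≤ γ) :
    ConcaveOn ℝ {q : EulerState | 0 < rho q} (pres γ) := by
  refine ⟨convex_rho_pos, fun x hx y hy a b ha hb hab => ?_⟩
  have h := mul_nonneg (sub_nonneg.2 hγ)
    (sub_nonneg.2 (convexOn_kinEnergy.2 hx hy ha hb hab))
  simp only [smul_eq_mul] at h ⊢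
  linarith [pres_combo_sub γ x y a b]

lemma pres_combo_gt {γ : ℝ} (hγ : 1 < γ) {x y : EulerState} {a b : ℝ} (hx : 0 < rho x)
    (hρ : rho x = rho y) (hm : mom1 x ≠ mom1 y ∨ mom2 x ≠ mom2 y)
    (ha : 0 < a) (hb : 0 < b) (hab : a + b = 1) :
    a * pres γ x + b * pres γ y < pres γ (a • x + b • y) := by
  have h := mul_pos (sub_pos.2 hγ) (sub_pos.2 (kinEnergy_combo_lt hx hρ hm ha hb hab))
  linarith [pres_combo_sub γ x y a b]

theorem convex_admissible {γ : ℝ} (hγ : 1 ≤ γ) : Convex ℝ {q : EulerState | admissible γ q} :=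
  (concaveOn_pres hγ).convex_gt 0

lemma eq_of_pres_eq {γ : ℝ} (hγ : γ ≠ 1) {x y : EulerState} (hρ : rho x = rho y)
    (hm₁ : mom1 x = mom1 y) (hm₂ : mom2 x = mom2 y) (hp : pres γ x = pres γ y) : x = y := by
  have hK : kinEnergy x = kinEnergy y := by rw [kinEnergy, kinEnergy, hρ, hm₁, hm₂]
  rw [pres_eq_sub_kinEnergy, pres_eq_sub_kinEnergy, hK] at hp
  have hE : toten x = toten y := by
    simpa using mul_left_cancel₀ (sub_ne_zero.2 hγ) hp
  funext i
  fin_cases i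
  exacts [hρ, hm₁, hm₂, hE]

def scaledEntropy (γ ρ p : ℝ) : ℝ := ρ * -log (p / ρ) + (γ - 1) * (ρ * log ρ)

lemma entU_eq_scaledEntropy {γ : ℝ} {q : EulerState} (hq : admissible γ q) :
    entU γ q = scaledEntropy γ (rho q) (pres γ q) / (γ - 1) := by
  obtain ⟨hρ, hp⟩ := hq
  unfold entU entS scaledEntropy
  rw [log_mul hp.ne' (rpow_pos_of_pos hρ _).ne', log_rpow hρ, log_div hp.ne' hρ.ne']
  ring

lemma scaledEntropy_combo_lt {γ ρ₁ ρ₂ p₁ p₂ P a b : ℝ} (hγ : 1 < γ)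
    (hρ₁ : 0 < ρ₁) (hρ₂ : 0 < ρ₂) (hp₁ : 0 < p₁) (hp₂ : 0 < p₂)
    (ha : 0 < a) (hb : 0 < b) (hab : a + b = 1)
    (hP : a * p₁ + b * p₂ ≤ P) (hstrict : ρ₁ ≠ ρ₂ ∨ p₁ / ρ₁ ≠ p₂ / ρ₂ ∨ a * p₁ + b * p₂ < P) :
    scaledEntropy γ (a * ρ₁ + b * ρ₂) P
      < a * scaledEntropy γ ρ₁ p₁ + b * scaledEntropy γ ρ₂ p₂ := by
  set ρ := a * ρ₁ + b * ρ₂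
  have hρ : 0 < ρ := convex_Ioi (0 : ℝ) hρ₁ hρ₂ ha.le hb.le hab
  have hP₀ : 0 < a * p₁ + b * p₂ := convex_Ioi (0 : ℝ) hp₁ hp₂ ha.le hb.le hab
  have hγ₁ : 0 < γ - 1 := sub_pos.2 hγ
  have anti : StrictAntiOn (fun p => ρ * -log (p / ρ)) (Set.Ioi 0) := fun p hp p' _ h =>
    mul_lt_mul_of_pos_left (neg_lt_neg (log_lt_log (div_pos hp hρ)
      (div_lt_div_of_pos_right h hρ))) hρ
  have neg_log : StrictConvexOn ℝ (Set.Ioi 0) (fun t => -log t) := strictConcaveOn_log_Ioi.neg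
  have hmem₁ : ρ₁⁻¹ • p₁ ∈ Set.Ioi (0 : ℝ) := show 0 < ρ₁⁻¹ * p₁ by positivity
  have hmem₂ : ρ₂⁻¹ • p₂ ∈ Set.Ioi (0 : ℝ) := show 0 < ρ₂⁻¹ * p₂ by positivity
  have persp : ρ * -log ((a * p₁ + b * p₂) / ρ)
      ≤ a * (ρ₁ * -log (p₁ / ρ₁)) + b * (ρ₂ * -log (p₂ / ρ₂)) := by
    simpa only [smul_eq_mul, ← div_eq_inv_mul] using
      neg_log.convexOn.perspective_le hρ₁ hρ₂ hmem₁ hmem₂ ha.le hb.le hab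
  have ent : ρ * log ρ ≤ a * (ρ₁ * log ρ₁) + b * (ρ₂ * log ρ₂) :=
    Real.convexOn_mul_log.2 (Set.mem_Ici.2 hρ₁.le) (Set.mem_Ici.2 hρ₂.le) ha.le hb.le hab
  have mono : ρ * -log (P / ρ) ≤ ρ * -log ((a * p₁ + b * p₂) / ρ) :=
    anti.antitoneOn hP₀ (lt_of_lt_of_le hP₀ hP) hP
  unfold scaledEntropy
  rcases hstrict with hne | hne | hlt
  · have ent' : ρ * log ρ < a * (ρ₁ * log ρ₁) + b * (ρ₂ * log ρ₂) :=
      Real.strictConvexOn_mul_log.2 (Set.mem_Ici.2 hρ₁.le) (Set.mem_Ici.2 hρ₂.le) hne ha hb hab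
    linarith [mul_lt_mul_of_pos_left ent' hγ₁]
  · rw [div_eq_inv_mul, div_eq_inv_mul] at hne
    have persp' : ρ * -log ((a * p₁ + b * p₂) / ρ)
        < a * (ρ₁ * -log (p₁ / ρ₁)) + b * (ρ₂ * -log (p₂ / ρ₂)) := by
      simpa only [smul_eq_mul, ← div_eq_inv_mul] using
        neg_log.perspective_lt hρ₁ hρ₂ hmem₁ hmem₂ hne ha hb hab
    linarith [mul_le_mul_of_nonneg_left ent hγ₁.le]
  · have mono' : ρ * -log (P / ρ) < ρ * -log ((a * p₁ + b * p₂) / ρ) :=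
      anti hP₀ (lt_of_lt_of_le hP₀ hP) hlt
    linarith [mul_le_mul_of_nonneg_left ent hγ₁.le]

/-- The entropy function `U` is strictly convex on the open set of
admissible states of the 2D compressible Euler equations. -/
theorem entropy_strictConvexOn (γ : ℝ) (hγ : 1 < γ) :
    StrictConvexOn ℝ {q : EulerState | admissible γ q} (entU γ) := by
  refine ⟨convex_admissible hγ.le, ?_⟩
  rintro x hx y hy hxy a b ha hb hab
  have hz : admissible γ (a • x + b • y) := convex_admissible hγ.le hx hy ha.le hb.le hab
  have hP : a * pres γ x + b * pres γ y ≤ pres γ (a • x + b • y) :=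
    (concaveOn_pres hγ.le).2 hx.1 hy.1 ha.le hb.le hab
  have hstrict : rho x ≠ rho y ∨ pres γ x / rho x ≠ pres γ y / rho y ∨
      a * pres γ x + b * pres γ y < pres γ (a • x + b • y) := by
    by_cases hρ : rho x = rho y
    · by_cases hp : pres γ x = pres γ y
      · refine Or.inr (Or.inr (pres_combo_gt hγ hx.1 hρ ?_ ha hb hab))
        by_contra! hm
        exact hxy (eq_of_pres_eq hγ.ne' hρ hm.1 hm.2 hp)
      · exact Or.inr (Or.inl (by rwa [hρ, Ne, div_left_inj' hy.1.ne']))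
    · exact Or.inl hρ
  have h := scaledEntropy_combo_lt hγ hx.1 hy.1 hx.2 hy.2 ha hb hab hP hstrict
  rw [entU_eq_scaledEntropy hz, entU_eq_scaledEntropy hx, entU_eq_scaledEntropy hy,
    smul_eq_mul, smul_eq_mul]
  calc _ < (a * scaledEntropy γ (rho x) (pres γ x)
          + b * scaledEntropy γ (rho y) (pres γ y)) / (γ - 1) :=
        div_lt_div_of_pos_right h (sub_pos.2 hγ)
    _ = _ := by ring
end
end

section
/- The pair (U, φₓ) is compatible with the x-flux of the 2D Euler equations: at every admissible state q, the gradient of U times the Jacobian of f equals the gradient of φₓ, i.e., (∇U(q))ᵀ · (∂f/∂q)(q) = (∇φₓ(q))ᵀ. -/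
open Real Matrix

noncomputable section

/-!
Write `s` for the entropy, so that `U = -ρ s/(γ-1)` and `φₓ = -ρ u s/(γ-1)`. By the product
rule `U'∘f' = φₓ'` reduces to two transport identities for the flux Jacobian: `ρ'∘f' = (ρu)'`,
the mass component of the flux, and `s'∘f' = u s'`, i.e. the entropy is advected with the flow.
The latter follows from `ρ'∘f' = u ρ' + ρ u'` and the pressure equation
`p'∘f' = u p' + γ p u'`, since `s' = p'/p - γ ρ'/ρ`.
-/

theorem HasFDerivAt.div {𝕜 E : Type*} [NontriviallyNormedField 𝕜] [NormedAddCommGroup E]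
    [NormedSpace 𝕜 E] {c d : E → 𝕜} {c' d' : E →L[𝕜] 𝕜} {x : E}
    (hc : HasFDerivAt c c' x) (hd : HasFDerivAt d d' x) (hx : d x ≠ 0) :
    HasFDerivAt (fun y => c y / d y) ((d x)⁻¹ • c' - (c x / d x ^ 2) • d') x := by
  simp_rw [div_eq_mul_inv]
  refine (hc.mul ((hasDerivAt_inv hx).comp_hasFDerivAt x hd)).congr_fderiv ?_
  rw [Function.comp_apply]
  module

open ContinuousLinearMap

section Derivatives

variable (γ : ℝ) (q : EulerState)

theorem hasFDerivAt_rho : HasFDerivAt rho (proj 0 : EulerState →L[ℝ] ℝ) q :=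
  hasFDerivAt_apply 0 q

theorem hasFDerivAt_mom1 : HasFDerivAt mom1 (proj 1 : EulerState →L[ℝ] ℝ) q :=
  hasFDerivAt_apply 1 q

theorem hasFDerivAt_mom2 : HasFDerivAt mom2 (proj 2 : EulerState →L[ℝ] ℝ) q :=
  hasFDerivAt_apply 2 q

theorem hasFDerivAt_toten : HasFDerivAt toten (proj 3 : EulerState →L[ℝ] ℝ) q :=
  hasFDerivAt_apply 3 q

def presDeriv : EulerState →L[ℝ] ℝ :=
  (γ - 1) •
    (proj 3 - uvel q • proj 1 - vvel q • proj 2 + ((uvel q ^ 2 + vvel q ^ 2) / 2) • proj 0)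

def uvelDeriv : EulerState →L[ℝ] ℝ := (rho q)⁻¹ • (proj 1 - uvel q • proj 0)

def vvelDeriv : EulerState →L[ℝ] ℝ := (rho q)⁻¹ • (proj 2 - vvel q • proj 0)

def entSDeriv : EulerState →L[ℝ] ℝ :=
  (pres γ q)⁻¹ • presDeriv γ q - (γ / rho q) • proj 0

def fFluxDeriv : EulerState →L[ℝ] EulerState :=
  pi ![uvel q • proj 0 + rho q • uvelDeriv q,
    uvel q ^ 2 • proj 0 + (2 * rho q * uvel q) • uvelDeriv q + presDeriv γ q,
    (uvel q * vvel q) • proj 0 + (rho q * vvel q) • uvelDeriv q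
      + (rho q * uvel q) • vvelDeriv q,
    uvel q • (proj 3 + presDeriv γ q) + (toten q + pres γ q) • uvelDeriv q]

variable {γ q}

theorem hasFDerivAt_uvel (hρ : rho q ≠ 0) : HasFDerivAt uvel (uvelDeriv q) q := by
  refine ((hasFDerivAt_mom1 q).div (hasFDerivAt_rho q) hρ).congr_fderiv ?_
  rw [uvelDeriv, uvel]
  module

theorem hasFDerivAt_vvel (hρ : rho q ≠ 0) : HasFDerivAt vvel (vvelDeriv q) q := by
  refine ((hasFDerivAt_mom2 q).div (hasFDerivAt_rho q) hρ).congr_fderiv ?_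
  rw [vvelDeriv, vvel]
  module

theorem hasFDerivAt_pres (hρ : rho q ≠ 0) : HasFDerivAt (pres γ) (presDeriv γ q) q := by
  have h2ρ : 2 * rho q ≠ 0 := mul_ne_zero two_ne_zero hρ
  refine (((hasFDerivAt_toten q).sub ((((hasFDerivAt_mom1 q).pow 2).add
    ((hasFDerivAt_mom2 q).pow 2)).div ((hasFDerivAt_rho q).const_mul 2) h2ρ)).const_mul
    (γ - 1)).congr_fderiv ?_
  rw [presDeriv, uvel, vvel, Pi.add_apply]
  module

theorem hasFDerivAt_entS (hρ : 0 < rho q) (hp : pres γ q ≠ 0) :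
    HasFDerivAt (entS γ) (entSDeriv γ q) q := by
  have hρpow : rho q ^ (-γ) ≠ 0 := (Real.rpow_pos_of_pos hρ _).ne'
  refine (((hasFDerivAt_pres hρ.ne').mul ((hasFDerivAt_rho q).rpow_const
    (Or.inl hρ.ne'))).log (mul_ne_zero hp hρpow)).congr_fderiv ?_
  rw [entSDeriv, Real.rpow_sub_one hρ.ne', Pi.mul_apply]
  match_scalars <;> field_simp

theorem hasFDerivAt_entU (hρ : 0 < rho q) (hp : pres γ q ≠ 0) :
    HasFDerivAt (entU γ)
      (-(γ - 1)⁻¹ • (entS γ q • proj 0 + rho q • entSDeriv γ q)) q := by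
  have h := (((hasFDerivAt_rho q).mul (hasFDerivAt_entS hρ hp)).neg).mul_const (γ - 1)⁻¹
  exact h.congr_fderiv (by module)

theorem hasFDerivAt_phiX (hρ : 0 < rho q) (hp : pres γ q ≠ 0) :
    HasFDerivAt (phiX γ) (-(γ - 1)⁻¹ • (entS γ q • (uvel q • proj 0 + rho q • uvelDeriv q)
      + (rho q * uvel q) • entSDeriv γ q)) q := by
  have h := ((((hasFDerivAt_rho q).mul (hasFDerivAt_uvel hρ.ne')).mul
    (hasFDerivAt_entS hρ hp)).neg).mul_const (γ - 1)⁻¹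
  exact h.congr_fderiv (by rw [Pi.mul_apply]; module)

theorem hasFDerivAt_fFlux (hρ : rho q ≠ 0) : HasFDerivAt (fFlux γ) (fFluxDeriv γ q) q := by
  have hu := hasFDerivAt_uvel hρ
  refine hasFDerivAt_pi.2 fun i => ?_
  fin_cases i
  · refine ((hasFDerivAt_rho q).mul hu).congr_fderiv ?_
    simp only [Fin.zero_eta, cons_val_zero]
    module
  · refine (((hasFDerivAt_rho q).mul (hu.pow 2)).add (hasFDerivAt_pres hρ)).congr_fderiv ?_
    simp only [Fin.mk_one, cons_val_one, cons_val_zero]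
    module
  · refine (((hasFDerivAt_rho q).mul hu).mul (hasFDerivAt_vvel hρ)).congr_fderiv ?_
    simp only [Fin.reduceFinMk, cons_val, Pi.mul_apply]
    module
  · refine (((hasFDerivAt_toten q).add (hasFDerivAt_pres hρ)).mul hu).congr_fderiv ?_
    simp only [Fin.reduceFinMk, cons_val, Pi.add_apply]
    module

theorem presDeriv_comp_fFluxDeriv (hρ : rho q ≠ 0) :
    (presDeriv γ q).comp (fFluxDeriv γ q) =
      uvel q • presDeriv γ q + (γ * pres γ q) • uvelDeriv q := by
  simp only [presDeriv, fFluxDeriv, uvelDeriv, vvelDeriv, sub_comp, add_comp, smul_comp, proj_pi,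
    cons_val]
  rw [pres, uvel, vvel]
  match_scalars <;> field_simp <;> ring

theorem proj_zero_comp_fFluxDeriv :
    (proj 0).comp (fFluxDeriv γ q) = uvel q • proj 0 + rho q • uvelDeriv q :=
  proj_pi _ 0

theorem entSDeriv_comp_fFluxDeriv (hρ : rho q ≠ 0) (hp : pres γ q ≠ 0) :
    (entSDeriv γ q).comp (fFluxDeriv γ q) = uvel q • entSDeriv γ q := by
  rw [entSDeriv, sub_comp, smul_comp, smul_comp, presDeriv_comp_fFluxDeriv hρ,
    proj_zero_comp_fFluxDeriv]
  match_scalars <;> field_simp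
  ring

end Derivatives

theorem entropy_pair_compatible_x_general (γ : ℝ) (q : EulerState)
    (hq : admissible γ q)
    (DU : EulerState →L[ℝ] ℝ) (Df : EulerState →L[ℝ] EulerState)
    (Dφ : EulerState →L[ℝ] ℝ)
    (hDU : HasFDerivAt (entU γ) DU q)
    (hDf : HasFDerivAt (fFlux γ) Df q)
    (hDφ : HasFDerivAt (phiX γ) Dφ q) :
    Dφ = DU.comp Df := by
  obtain ⟨hρ, hp⟩ := hq
  rw [hDφ.unique (hasFDerivAt_phiX hρ hp.ne'), hDU.unique (hasFDerivAt_entU hρ hp.ne'),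
    hDf.unique (hasFDerivAt_fFlux hρ.ne')]
  simp only [smul_comp, add_comp, proj_zero_comp_fFluxDeriv,
    entSDeriv_comp_fFluxDeriv hρ.ne' hp.ne']
  module

/-- the entropy pair `(U, φₓ)` is compatible with the x-flux: at every
admissible state, `U'(q) ∘ f'(q) = φₓ'(q)` (as linear maps, i.e. row-vector times
Jacobian equals the gradient of `φₓ`). -/
theorem entropy_pair_compatible_x (γ : ℝ) (hγ : 1 < γ) (q : EulerState)
    (hq : admissible γ q)
    (DU : EulerState →L[ℝ] ℝ) (Df : EulerState →L[ℝ] EulerState)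
    (Dφ : EulerState →L[ℝ] ℝ)
    (hDU : HasFDerivAt (entU γ) DU q)
    (hDf : HasFDerivAt (fFlux γ) Df q)
    (hDφ : HasFDerivAt (phiX γ) Dφ q) :
    Dφ = DU.comp Df :=
  entropy_pair_compatible_x_general γ q hq DU Df Dφ hDU hDf hDφ
end
end

section
/- The Chandrashekar flux F* is entropy conservative in the sense of Tadmor: for all admissible states q⁻, q⁺ of the 2D Euler equations, (r(q⁺) − r(q⁻)) · F*(q⁻, q⁺) = ρ⁺u⁺ − ρ⁻u⁻. -/
open Real Matrix

noncomputable section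

lemma logMean_mul_log {a b : ℝ} (ha : 0 < a) (hb : 0 < b) :
    logMean a b * (Real.log b - Real.log a) = b - a := by
  unfold logMean
  by_cases h : a = b
  · simp [h]
  · rw [if_neg h]
    have hlog : Real.log b - Real.log a ≠ 0 := by
      refine sub_ne_zero.mpr fun hc => h ?_
      exact Real.log_injOn_pos (Set.mem_Ioi.mpr hb) (Set.mem_Ioi.mpr ha) hc |>.symm
    field_simp

lemma logMean_pos {a b : ℝ} (ha : 0 < a) (hb : 0 < b) : 0 < logMean a b := by
  unfold logMean
  rcases lt_trichotomy a b with h | h | h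
  · rw [if_neg h.ne]
    exact div_pos (by linarith) (sub_pos.mpr (Real.log_lt_log ha h))
  · rw [if_pos h]; exact ha
  · rw [if_neg h.ne']
    exact div_pos_iff.mpr (Or.inr ⟨by linarith, sub_neg.mpr (Real.log_lt_log hb h)⟩)


/-- the Chandrashekar flux is entropy conservative in the sense of Tadmor:
`(r(q⁺) − r(q⁻)) ⬝ F*(q⁻,q⁺) = ρ⁺u⁺ − ρ⁻u⁻`. -/
theorem chandrashekar_entropy_conservative (γ : ℝ) (hγ : 1 < γ)
    (qm qp : EulerState) (hm : admissible γ qm) (hp : admissible γ qp) :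
    (entVar γ qp - entVar γ qm) ⬝ᵥ chandrashekarFlux γ qm qp
      = rho qp * uvel qp - rho qm * uvel qm := by
  obtain ⟨hρm, hpm⟩ := hm
  obtain ⟨hρp, hpp⟩ := hp
  have hγ1 : γ - 1 ≠ 0 := by linarith
  have hβm : 0 < betaCoef γ qm := div_pos hρm (by linarith)
  have hβp : 0 < betaCoef γ qp := div_pos hρp (by linarith)
  have hsm : ∀ q : EulerState, 0 < rho q → 0 < pres γ q →
      entS γ q = Real.log (pres γ q) - γ * Real.log (rho q) := by
    intro q h1 h2
    unfold entS
    rw [Real.log_mul h2.ne' (Real.rpow_pos_of_pos h1 _).ne', Real.log_rpow h1]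
    ring
  have hlb : ∀ q : EulerState, 0 < rho q → 0 < pres γ q →
      Real.log (betaCoef γ q) = Real.log (rho q) - Real.log 2 - Real.log (pres γ q) := by
    intro q h1 h2
    unfold betaCoef
    rw [Real.log_div h1.ne' (by positivity), Real.log_mul two_ne_zero h2.ne']
    ring
  simp only [chandrashekarFlux, entVar, dotProduct, Fin.sum_univ_four, Pi.sub_apply,
    Matrix.cons_val_zero, Matrix.cons_val_one, Matrix.head_cons, Matrix.cons_val_two,
    Matrix.tail_cons, Matrix.cons_val_three, hsm qm hρm hpm, hsm qp hρp hpp]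
  set X := logMean (rho qm) (rho qp) with hXdef
  have hXpos : 0 < X := logMean_pos hρm hρp
  set Y := logMean (betaCoef γ qm) (betaCoef γ qp) with hYdef
  have hYpos : 0 < Y := logMean_pos hβm hβp
  have hX2 : Real.log (rho qp) = Real.log (rho qm) + (rho qp - rho qm) / X := by
    have h := logMean_mul_log hρm hρp
    rw [← hXdef] at h
    field_simp
    nlinarith [h]
  have hY2 := logMean_mul_log hβm hβp
  rw [← hYdef, hlb qm hρm hpm, hlb qp hρp hpp] at hY2
  have hP : Real.log (pres γ qp) = Real.log (pres γ qm) + (rho qp - rho qm) / X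
      - (betaCoef γ qp - betaCoef γ qm) / Y := by
    have : Y * ((Real.log (rho qp) - Real.log (rho qm)) -
        (Real.log (pres γ qp) - Real.log (pres γ qm)))
        = betaCoef γ qp - betaCoef γ qm := by linarith [hY2]
    rw [hX2] at this
    field_simp at this ⊢
    nlinarith [this]
  rw [hX2, hP]
  have hsum : betaCoef γ qm + betaCoef γ qp ≠ 0 := by positivity
  field_simp
  ring
end
end

section
/- The entropy diffusion matrix is positive semidefinite: at every admissible state q of the 2D Euler equations and for every diagonal matrix |Λ| = diag(λ₁, λ₂, λ₃, λ₄) with nonnegative entries, the matrix Q := R |Λ| S Rᵀ is symmetric and positive semidefinite; if all λᵢ are strictly positive then Q is positive definite. -/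
open Real Matrix

noncomputable section

/-! Because `S` is diagonal with positive entries `s`, `Q = R diag(λ s) Rᵀ` is a congruence of a
nonnegative diagonal matrix, hence positive semidefinite; for `λ > 0` it is positive definite
since `det R = -2c³/(γ-1) ≠ 0`. -/

namespace Matrix

variable {n R : Type*} [Fintype n] [DecidableEq n] [CommRing R] [PartialOrder R] [StarRing R]
  [TrivialStar R] [StarOrderedRing R]

lemma posSemidef_mul_diagonal_mul_transpose (B : Matrix n n R) {d : n → R}
    (hd : ∀ i, 0 ≤ d i) : (B * diagonal d * Bᵀ).PosSemidef := by
  simpa using (posSemidef_diagonal_iff.mpr hd).mul_mul_conjTranspose_same B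

lemma posDef_mul_diagonal_mul_transpose [NoZeroDivisors R] [Nontrivial R] {B : Matrix n n R}
    (hB : Function.Injective B.vecMul) {d : n → R} (hd : ∀ i, 0 < d i) :
    (B * diagonal d * Bᵀ).PosDef := by
  simpa using (posDef_diagonal_iff.mpr hd).mul_mul_conjTranspose_same hB

end Matrix

lemma det_euler_eigenvectors {R : Type*} [CommRing R] (u v c H k : R) :
    !![1, 1, 0, 1;
       u - c, u, 0, u + c;
       v, v, -1, v;
       H - c * u, k, -v, H + c * u].det = -2 * c * (H - k) := by
  simp [det_succ_row_zero, Fin.sum_univ_succ, Fin.succAbove]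
  ring

lemma det_eigMat (γ : ℝ) (q : EulerState) :
    (eigMat γ q).det = -2 * cSound γ q ^ 3 / (γ - 1) := by
  rw [eigMat, det_euler_eigenvectors, enthalpyH]
  ring

lemma cSound_pos {γ : ℝ} (hγ : 1 < γ) {q : EulerState} (hq : admissible γ q) :
    0 < cSound γ q :=
  Real.sqrt_pos.mpr (div_pos (mul_pos (by linarith) hq.2) hq.1)

lemma isUnit_eigMat {γ : ℝ} (hγ : 1 < γ) {q : EulerState} (hq : admissible γ q) :
    IsUnit (eigMat γ q) := by
  have hc := cSound_pos hγ hq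
  have hγ₁ : 0 < γ - 1 := sub_pos.mpr hγ
  rw [isUnit_iff_isUnit_det, det_eigMat, isUnit_iff_ne_zero]
  positivity

lemma diag_scalMat_pos {γ : ℝ} (hγ : 1 < γ) {q : EulerState} (hq : admissible γ q) (i : Fin 4) :
    0 < (scalMat γ q).diag i := by
  have hγ₀ : 0 < γ := by linarith
  have hγ₁ : 0 < γ - 1 := sub_pos.mpr hγ
  obtain ⟨hρ, hp⟩ := hq
  fin_cases i <;> simp [scalMat] <;> positivity

lemma Qmat_eq_mul_diagonal_mul_transpose (γ : ℝ) (lam : Fin 4 → ℝ) (q : EulerState) :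
    Qmat γ lam q = eigMat γ q * diagonal (lam * (scalMat γ q).diag) * (eigMat γ q)ᵀ := by
  rw [Qmat, Matrix.mul_assoc (eigMat γ q), scalMat, diagonal_mul_diagonal, diag_diagonal]
  rfl

/-- the entropy diffusion matrix `Q = R |Λ| S Rᵀ` is symmetric and
positive semidefinite for any nonnegative diagonal `|Λ|`, and positive definite if
all diagonal entries are strictly positive. -/
theorem entropy_diffusion_matrix_posSemidef (γ : ℝ) (hγ : 1 < γ) (q : EulerState)
    (hq : admissible γ q) (lam : Fin 4 → ℝ) (hlam : ∀ i, 0 ≤ lam i) :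
    (Qmat γ lam q).IsSymm ∧ (Qmat γ lam q).PosSemidef ∧
      ((∀ i, 0 < lam i) → (Qmat γ lam q).PosDef) := by
  have hS := diag_scalMat_pos hγ hq
  rw [Qmat_eq_mul_diagonal_mul_transpose]
  have hQ := posSemidef_mul_diagonal_mul_transpose (eigMat γ q)
    fun i => mul_nonneg (hlam i) (hS i).le
  refine ⟨isHermitian_iff_isSymm.mp hQ.isHermitian, hQ, fun hlam_pos => ?_⟩
  exact posDef_mul_diagonal_mul_transpose (vecMul_injective_iff_isUnit.mpr (isUnit_eigMat hγ hq))
    fun i => mul_pos (hlam_pos i) (hS i)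
end
end

section
/- The ES-KES diffusion dominates the ES diffusion: at every admissible state q of the 2D Euler equations, the matrix Q^KES − Q^Roe is positive semidefinite, where Q^KES := R |Λ|^KES S Rᵀ with |Λ|^KES := diag(|u|+c, |u|, |u|, |u|+c) and Q^Roe := R |Λ|^Roe S Rᵀ with |Λ|^Roe := diag(|u−c|, |u|, |u|, |u+c|); in particular, for every vector w ∈ ℝ⁴, wᵀ Q^KES w ≥ wᵀ Q^Roe w. -/
open Real Matrix

noncomputable section

/-- the ES-KES diffusion dominates the ES diffusion: at every admissible
state `Q^KES − Q^Roe` is positive semidefinite; in particular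
`wᵀ Q^Roe w ≤ wᵀ Q^KES w` for every `w`. -/
theorem kes_diffusion_dominates_roe (γ : ℝ) (hγ : 1 < γ) (q : EulerState)
    (hq : admissible γ q) :
    (Qmat γ (lamKES γ q) q - Qmat γ (lamRoe γ q) q).PosSemidef ∧
      ∀ w : Fin 4 → ℝ,
        w ⬝ᵥ (Qmat γ (lamRoe γ q) q).mulVec w ≤ w ⬝ᵥ (Qmat γ (lamKES γ q) q).mulVec w := by
  obtain ⟨hρ, hp⟩ := hq
  have hc : 0 ≤ cSound γ q := Real.sqrt_nonneg _
  set s : Fin 4 → ℝ := ![rho q / (2 * γ), (γ - 1) * rho q / γ, pres γ q, rho q / (2 * γ)]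
    with hs
  have key : ∀ lam : Fin 4 → ℝ,
      Qmat γ lam q = eigMat γ q * Matrix.diagonal (lam * s) * (eigMat γ q)ᵀ := by
    intro lam
    unfold Qmat scalMat
    rw [Matrix.mul_assoc (eigMat γ q), Matrix.diagonal_mul_diagonal]
    rfl
  have hdiff : Qmat γ (lamKES γ q) q - Qmat γ (lamRoe γ q) q =
      eigMat γ q * Matrix.diagonal (lamKES γ q * s - lamRoe γ q * s) * (eigMat γ q)ᵀ := by
    rw [key, key, ← Matrix.sub_mul, ← Matrix.mul_sub, Matrix.diagonal_sub]
    rfl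
  have hsnn : ∀ i, 0 ≤ s i := by
    intro i
    fin_cases i <;> simp [hs]
    · exact div_nonneg hρ.le (by linarith)
    · exact div_nonneg (mul_nonneg (by linarith) hρ.le) (by linarith)
    · exact hp.le
    · exact div_nonneg hρ.le (by linarith)
  have hle : ∀ i, lamRoe γ q i ≤ lamKES γ q i := by
    intro i
    fin_cases i <;> simp [lamRoe, lamKES]
    · calc |uvel q - cSound γ q| ≤ |uvel q| + |cSound γ q| := abs_sub _ _
        _ = |uvel q| + cSound γ q := by rw [abs_of_nonneg hc]
    · calc |uvel q + cSound γ q| ≤ |uvel q| + |cSound γ q| := abs_add_le _ _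
        _ = |uvel q| + cSound γ q := by rw [abs_of_nonneg hc]
  have hdnn : ∀ i, 0 ≤ (lamKES γ q * s - lamRoe γ q * s) i := by
    intro i
    have : lamRoe γ q i * s i ≤ lamKES γ q i * s i :=
      mul_le_mul_of_nonneg_right (hle i) (hsnn i)
    simpa [sub_nonneg] using this
  have hpsd : (Qmat γ (lamKES γ q) q - Qmat γ (lamRoe γ q) q).PosSemidef := by
    rw [hdiff]
    have hD : (Matrix.diagonal (lamKES γ q * s - lamRoe γ q * s)).PosSemidef :=
      Matrix.posSemidef_diagonal_iff.mpr hdnn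
    have := hD.mul_mul_conjTranspose_same (eigMat γ q)
    rwa [Matrix.conjTranspose_eq_transpose_of_trivial] at this
  refine ⟨hpsd, fun w => ?_⟩
  have h0 := hpsd.dotProduct_mulVec_nonneg w
  simp only [star_trivial, Matrix.sub_mulVec, dotProduct_sub] at h0
  linarith
end
end

section
/- An entropy stable numerical flux yields semi-discrete total entropy decay on a periodic 1D grid: let N ≥ 1, Δx > 0, and let F be a numerical flux such that (r(q⁺) − r(q⁻)) · F(q⁻, q⁺) ≤ ρ⁺u⁺ − ρ⁻u⁻ for all admissible states q⁻, q⁺. If q_i : ℝ → ℝ⁴ (i ∈ ℤ/Nℤ) are differentiable curves of admissible states satisfying dq_i/dt = −(F(q_i, q_{i+1}) − F(q_{i−1}, q_i))/Δx, then d/dt Σ_{i ∈ ℤ/Nℤ} U(q_i(t)) Δx ≤ 0 for all t. -/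
open Real Matrix

noncomputable section

/-!
Along a curve of admissible states `dU(q)/dt = r(q) · dq/dt`, since `∇U = r`. Inserting the
scheme, the cell `i` contributes `-r(qᵢ) · (F_{i+1/2} - F_{i-1/2})`. Shifting the index in the
sum of the `F_{i-1/2}` terms turns the total into `-Σᵢ (r(qᵢ₊₁) - r(qᵢ)) · F_{i+1/2}`, and by
entropy stability this is at least `-Σᵢ (ρᵢ₊₁uᵢ₊₁ - ρᵢuᵢ)`, which telescopes to zero on the
periodic grid.
-/

section ChainRule

variable {γ : ℝ} {c : ℝ → EulerState} {c' : EulerState} {t : ℝ}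

theorem hasDerivAt_pres_comp (hc : HasDerivAt c c' t) (hρ : rho (c t) ≠ 0) :
    HasDerivAt (fun τ => pres γ (c τ))
      ((γ - 1) * ((uvel (c t) ^ 2 + vvel (c t) ^ 2) / 2 * c' 0
        - uvel (c t) * c' 1 - vvel (c t) * c' 2 + c' 3)) t := by
  have hcoord (i : Fin 4) : HasDerivAt (fun τ => c τ i) (c' i) t := hasDerivAt_pi.mp hc i
  have hkin := (((hcoord 1).pow 2).add ((hcoord 2).pow 2)).div ((hcoord 0).const_mul 2)
    (mul_ne_zero two_ne_zero hρ)
  refine (((hcoord 3).sub hkin).const_mul (γ - 1)).congr_deriv ?_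
  simp only [rho, uvel, vvel, mom1, mom2, Pi.add_apply, Pi.pow_apply] at hρ ⊢
  field_simp
  ring

theorem hasDerivAt_entS_comp (hc : HasDerivAt c c' t) (hq : admissible γ (c t)) :
    HasDerivAt (fun τ => entS γ (c τ))
      ((γ - 1) * ((uvel (c t) ^ 2 + vvel (c t) ^ 2) / 2 * c' 0
        - uvel (c t) * c' 1 - vvel (c t) * c' 2 + c' 3) / pres γ (c t)
        - γ * c' 0 / rho (c t)) t := by
  obtain ⟨hρ, hp⟩ := hq
  have hρpow : HasDerivAt (fun τ => rho (c τ) ^ (-γ)) (c' 0 * -γ * rho (c t) ^ (-γ - 1)) t :=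
    (hasDerivAt_pi.mp hc 0).rpow_const (Or.inl hρ.ne')
  have hρpow_pos : 0 < rho (c t) ^ (-γ) := Real.rpow_pos_of_pos hρ _
  refine (((hasDerivAt_pres_comp hc hρ.ne').mul hρpow).log
    (mul_pos hp hρpow_pos).ne').congr_deriv ?_
  rw [Pi.mul_apply, Real.rpow_sub_one hρ.ne']
  field_simp
  ring

theorem hasDerivAt_entU_comp (hγ : γ ≠ 1) (hc : HasDerivAt c c' t) (hq : admissible γ (c t)) :
    HasDerivAt (fun τ => entU γ (c τ)) (entVar γ (c t) ⬝ᵥ c') t := by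
  have hγ1 : γ - 1 ≠ 0 := sub_ne_zero.mpr hγ
  refine (((hasDerivAt_pi.mp hc 0).mul (hasDerivAt_entS_comp hc hq)).neg.div_const
    (γ - 1)).congr_deriv ?_
  have hρ : rho (c t) ≠ 0 := hq.1.ne'
  have hp : pres γ (c t) ≠ 0 := hq.2.ne'
  simp only [entVar, betaCoef, uvel, vvel, dotProduct, Fin.sum_univ_four, Matrix.cons_val_zero,
    Matrix.cons_val_one, Matrix.cons_val_two, Matrix.cons_val_three, Matrix.head_cons,
    Matrix.tail_cons]
  simp only [rho, mom1, mom2] at hρ ⊢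
  field_simp
  ring

end ChainRule

/-- `F i` is the flux through the interface between cells `i` and `i + 1`. -/
theorem sum_dotProduct_flux_sub_nonneg {G ι : Type*} [AddGroupWithOne G] [Fintype G] [Fintype ι]
    (r F : G → ι → ℝ) (ψ : G → ℝ) (hF : ∀ i, (r (i + 1) - r i) ⬝ᵥ F i ≤ ψ (i + 1) - ψ i) :
    0 ≤ ∑ i, r i ⬝ᵥ (F i - F (i - 1)) := by
  have hshift (g : G → ℝ) : ∑ i, g (i + 1) = ∑ i, g i := Equiv.sum_comp (Equiv.addRight 1) g
  have hinflow : ∑ i, r i ⬝ᵥ F (i - 1) = ∑ i, r (i + 1) ⬝ᵥ F i := by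
    rw [← hshift fun i => r i ⬝ᵥ F (i - 1)]
    simp only [add_sub_cancel_right]
  calc (0 : ℝ) = ∑ i, (ψ i - ψ (i + 1)) := by
        rw [Finset.sum_sub_distrib, hshift ψ, sub_self]
    _ ≤ ∑ i, -((r (i + 1) - r i) ⬝ᵥ F i) :=
        Finset.sum_le_sum fun i _ => by linarith [hF i]
    _ = ∑ i, r i ⬝ᵥ (F i - F (i - 1)) := by
        simp only [sub_dotProduct, dotProduct_sub, Finset.sum_neg_distrib,
          Finset.sum_sub_distrib, hinflow]
        ring

/-- an entropy stable numerical flux yields semi-discrete total entropy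
decay on a periodic 1D grid: if `dq_i/dt = −(F(q_i,q_{i+1}) − F(q_{i−1},q_i))/Δx` with
admissible states, then `d/dt Σ_i U(q_i(t)) Δx ≤ 0`. -/
theorem semidiscrete_entropy_decay (γ : ℝ) (hγ : 1 < γ)
    (N : ℕ) [NeZero N] (Δx : ℝ) (hΔx : 0 < Δx)
    (F : EulerState → EulerState → EulerState)
    (hF : ∀ qm qp : EulerState, admissible γ qm → admissible γ qp →
      (entVar γ qp - entVar γ qm) ⬝ᵥ F qm qp ≤ rho qp * uvel qp - rho qm * uvel qm)
    (q : ZMod N → ℝ → EulerState)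
    (hadm : ∀ i t, admissible γ (q i t))
    (hode : ∀ i t, HasDerivAt (q i)
      (-(Δx)⁻¹ • (F (q i t) (q (i + 1) t) - F (q (i - 1) t) (q i t))) t) :
    ∀ t : ℝ, deriv (fun τ => ∑ i : ZMod N, entU γ (q i τ) * Δx) t ≤ 0 := by
  intro t
  set flux : ZMod N → EulerState := fun i => F (q i t) (q (i + 1) t)
  have hcell (i : ZMod N) : HasDerivAt (fun τ => entU γ (q i τ) * Δx)
      (-(entVar γ (q i t) ⬝ᵥ (flux i - flux (i - 1)))) t := by
    refine ((hasDerivAt_entU_comp hγ.ne' (hode i t) (hadm i t)).mul_const Δx).congr_deriv ?_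
    simp only [flux, sub_add_cancel, dotProduct_smul, smul_eq_mul]
    field_simp
  have hstable := sum_dotProduct_flux_sub_nonneg (fun i => entVar γ (q i t)) flux
    (fun i => rho (q i t) * uvel (q i t)) fun i => hF _ _ (hadm i t) (hadm (i + 1) t)
  rw [(HasDerivAt.fun_sum fun i _ => hcell i).deriv, Finset.sum_neg_distrib]
  exact neg_nonpos.mpr hstable
end
end

section
/- Jameson's kinetic energy preservation identity holds for any flux in Jameson form on a periodic 1D grid: let N ≥ 1, Δx > 0, let ρ_i > 0 and u_i be real numbers indexed by i ∈ ℤ/Nℤ, and let F^ρ_{i+1/2} and ⟨p⟩_{i+1/2} be arbitrary real numbers indexed by the interfaces. Define the semi-discrete rates Dρ_i := −(F^ρ_{i+1/2} − F^ρ_{i−1/2})/Δx and D(ρu)_i := −((ū_{i+1/2} F^ρ_{i+1/2} + ⟨p⟩_{i+1/2}) − (ū_{i−1/2} F^ρ_{i−1/2} + ⟨p⟩_{i−1/2}))/Δx, where ū_{i+1/2} := (u_i + u_{i+1})/2. Then Σ_{i ∈ ℤ/Nℤ} (−½ u_i² Dρ_i + u_i D(ρu)_i) Δx = Σ_{i ∈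 ℤ/Nℤ} ⟨p⟩_{i+1/2} (u_{i+1} − u_i). -/
/-- Jameson's kinetic energy preservation identity on a periodic 1D grid:
for any flux in Jameson form (momentum flux `ū F^ρ + ⟨p⟩`), the chain-rule time
derivative of the total kinetic energy equals `Σ_i ⟨p⟩_{i+1/2}(u_{i+1} − u_i)`.
Interface `i + 1/2` is indexed by `i`. -/
theorem jameson_kinetic_energy_identity
    (N : ℕ) [NeZero N] (Δx : ℝ) (hΔx : 0 < Δx)
    (ρ u : ZMod N → ℝ) (hρ : ∀ i, 0 < ρ i)
    (Fρ P : ZMod N → ℝ) :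
    (∑ i : ZMod N,
        (-(1 / 2) * u i ^ 2 * (-(Fρ i - Fρ (i - 1)) / Δx)
          + u i *
            (-(((u i + u (i + 1)) / 2 * Fρ i + P i)
                - ((u (i - 1) + u i) / 2 * Fρ (i - 1) + P (i - 1))) / Δx)) * Δx)
      = ∑ i : ZMod N, P i * (u (i + 1) - u i) := by
  have shift : ∀ f : ZMod N → ℝ, ∑ i, f (i - 1) = ∑ i, f i := fun f =>
    Fintype.sum_equiv (Equiv.subRight 1) _ _ (fun i => rfl)
  have h1 : ∑ i : ZMod N, (-(1/2) * u (i-1) * u i * Fρ (i-1))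
      = ∑ i : ZMod N, (-(1/2) * u i * u (i+1) * Fρ i) := by
    have := shift (fun i => -(1/2) * u i * u (i+1) * Fρ i)
    simpa using this
  have h2 : ∑ i : ZMod N, (u i * P (i-1)) = ∑ i : ZMod N, (u (i+1) * P i) := by
    have := shift (fun i => u (i+1) * P i)
    simpa using this
  have step : ∀ i : ZMod N,
      (-(1 / 2) * u i ^ 2 * (-(Fρ i - Fρ (i - 1)) / Δx)
          + u i *
            (-(((u i + u (i + 1)) / 2 * Fρ i + P i)
                - ((u (i - 1) + u i) / 2 * Fρ (i - 1) + P (i - 1))) / Δx)) * Δx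
      = ((-(1/2) * u i * u (i+1) * Fρ i) - (-(1/2) * u (i-1) * u i * Fρ (i-1)))
        + ((u i * P (i-1)) - (u i * P i)) := by
    intro i
    field_simp
    ring
  rw [Finset.sum_congr rfl (fun i _ => step i), Finset.sum_add_distrib,
    Finset.sum_sub_distrib, Finset.sum_sub_distrib, h1, sub_self, zero_add, h2]
  rw [← Finset.sum_sub_distrib]
  exact Finset.sum_congr rfl (fun i _ => by ring)
end

section
/- The ES flux with the Chandrashekar intermediate state has the contact property: for admissible states q⁻, q⁺ with u⁻ = u⁺ = 0, v⁻ = v⁺ = 0, and p⁻ = p⁺ = p (arbitrary densities ρ⁻, ρ⁺ > 0), the flux F^ES(q⁻, q⁺) := F*(q⁻, q⁺) − ½ Q(q_int)(r(q⁺) − r(q⁻)) equals the exact flux (0, p, 0, 0), where Q(q_int) := R |Λ|^Roe S Rᵀ with |Λ|^Roe := diag(|u−c|,|u|,|u|,|u+c|) is evaluated at the intermediate state with velocity v_int := v̄ = 0, u_int := ū = 0, pressure p_int := p̄ = p, and density ρ_int := 2 p_int β̂ (so that c_int = √(γ/(2β̂))). -/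
open Real Matrix

noncomputable section

lemma sub_eq_logMean_mul_log_sub {a b : ℝ} (ha : 0 < a) (hb : 0 < b) :
    b - a = logMean a b * (Real.log b - Real.log a) := by
  unfold logMean
  split_ifs with h
  · simp [h]
  · have hlog : Real.log b - Real.log a ≠ 0 := fun hc =>
      h (Real.log_injOn_pos ha hb (by linarith))
    field_simp

section Admissible

variable {γ : ℝ} {q : EulerState}

lemma betaCoef_pos (hq : admissible γ q) : 0 < betaCoef γ q :=
  div_pos hq.1 (mul_pos two_pos hq.2)

lemma entS_eq (hq : admissible γ q) :
    entS γ q = Real.log (pres γ q) - γ * Real.log (rho q) := by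
  rw [entS, Real.log_mul hq.2.ne' (Real.rpow_pos_of_pos hq.1 _).ne', Real.log_rpow hq.1]
  ring

end Admissible

def restState (γ ρ p : ℝ) : EulerState := ![ρ, 0, 0, p / (γ - 1)]

section RestState

variable {γ : ℝ}

@[simp] lemma rho_restState (ρ p : ℝ) : rho (restState γ ρ p) = ρ := rfl

@[simp] lemma uvel_restState (ρ p : ℝ) : uvel (restState γ ρ p) = 0 := by
  simp [uvel, mom1, restState]

@[simp] lemma vvel_restState (ρ p : ℝ) : vvel (restState γ ρ p) = 0 := by
  simp [vvel, mom2, restState]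

lemma pres_restState (hγ : γ ≠ 1) (ρ p : ℝ) : pres γ (restState γ ρ p) = p := by
  have : γ - 1 ≠ 0 := sub_ne_zero.mpr hγ
  simp [pres, toten, mom1, mom2, restState]
  field_simp

lemma enthalpyH_restState (hγ : 1 < γ) {ρ p : ℝ} (hρ : 0 < ρ) (hp : 0 < p) :
    enthalpyH γ (restState γ ρ p) = γ * p / (ρ * (γ - 1)) := by
  have hc : cSound γ (restState γ ρ p) ^ 2 = γ * p / ρ := by
    rw [cSound, pres_restState hγ.ne', rho_restState, Real.sq_sqrt (by positivity)]
  rw [enthalpyH, hc, uvel_restState, vvel_restState]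
  field_simp
  ring

end RestState

lemma transpose_eigMat_mulVec_of_rest {γ : ℝ} {q : EulerState} (hu : uvel q = 0)
    (hv : vvel q = 0) (a b : ℝ) :
    (eigMat γ q)ᵀ *ᵥ ![a, 0, 0, b] = ![a + enthalpyH γ q * b, a, 0, a + enthalpyH γ q * b] := by
  ext i
  fin_cases i <;> simp [eigMat, hu, hv, mulVec, dotProduct, Fin.sum_univ_four]

/-- At rest the contact eigenvalue vanishes, so `Q` only sees the acoustic characteristic
component `a + H b` of `![a, 0, 0, b]`. -/
lemma Qmat_lamRoe_mulVec_eq_zero_of_rest {γ : ℝ} {q : EulerState} (hu : uvel q = 0)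
    (hv : vvel q = 0) {a b : ℝ} (hab : a + enthalpyH γ q * b = 0) :
    Qmat γ (lamRoe γ q) q *ᵥ ![a, 0, 0, b] = 0 := by
  have hker : diagonal (lamRoe γ q) *ᵥ (scalMat γ q *ᵥ ![0, a, 0, 0]) = 0 := by
    ext i
    fin_cases i <;> simp [lamRoe, scalMat, hu, mulVec_diagonal]
  rw [Qmat, ← mulVec_mulVec, transpose_eigMat_mulVec_of_rest hu hv, hab, ← mulVec_mulVec,
    ← mulVec_mulVec, hker, mulVec_zero]

lemma Qmat_lamRoe_restState_mulVec_eq_zero {γ : ℝ} (hγ : 1 < γ) {p β : ℝ} (hp : 0 < p)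
    (hβ : 0 < β) :
    Qmat γ (lamRoe γ (restState γ (2 * p * β) p)) (restState γ (2 * p * β) p) *ᵥ
      ![γ / (γ - 1), 0, 0, -2 * β] = 0 := by
  refine Qmat_lamRoe_mulVec_eq_zero_of_rest (uvel_restState _ _) (vvel_restState _ _) ?_
  have : γ - 1 ≠ 0 := by linarith
  rw [enthalpyH_restState hγ (by positivity) hp]
  field_simp
  ring

section Contact

variable {γ : ℝ} {qm qp : EulerState}

lemma log_betaCoef_sub_of_pres_eq (hm : admissible γ qm) (hp : admissible γ qp)
    (hpp : pres γ qm = pres γ qp) :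
    Real.log (betaCoef γ qp) - Real.log (betaCoef γ qm) =
      Real.log (rho qp) - Real.log (rho qm) := by
  have h2p : 2 * pres γ qm ≠ 0 := by linarith [hm.2]
  rw [betaCoef, betaCoef, ← hpp, Real.log_div hm.1.ne' h2p, Real.log_div hp.1.ne' h2p]
  ring

lemma entVar_sub_of_contact (hm : admissible γ qm) (hp : admissible γ qp)
    (hum : uvel qm = 0) (hup : uvel qp = 0) (hvm : vvel qm = 0) (hvp : vvel qp = 0)
    (hpp : pres γ qm = pres γ qp) :
    entVar γ qp - entVar γ qm = (Real.log (betaCoef γ qp) - Real.log (betaCoef γ qm)) •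
      ![γ / (γ - 1), 0, 0, -2 * logMean (betaCoef γ qm) (betaCoef γ qp)] := by
  have hs : entS γ qm - entS γ qp =
      γ * (Real.log (betaCoef γ qp) - Real.log (betaCoef γ qm)) := by
    rw [entS_eq hm, entS_eq hp, log_betaCoef_sub_of_pres_eq hm hp hpp, hpp]
    ring
  have hβ := sub_eq_logMean_mul_log_sub (betaCoef_pos hm) (betaCoef_pos hp)
  ext i
  fin_cases i <;> simp [entVar, hum, hup, hvm, hvp]
  · linear_combination hs / (γ - 1)
  · linear_combination (-2) * hβ

lemma chandrashekarFlux_of_contact (hm : admissible γ qm) (hp : admissible γ qp)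
    (hum : uvel qm = 0) (hup : uvel qp = 0) (hvm : vvel qm = 0) (hvp : vvel qp = 0)
    (hpp : pres γ qm = pres γ qp) :
    chandrashekarFlux γ qm qp = ![0, pres γ qm, 0, 0] := by
  obtain ⟨hρm, hpm⟩ := hm
  have hρp := hp.1
  ext i
  fin_cases i <;> simp [chandrashekarFlux, hum, hup, hvm, hvp, betaCoef, ← hpp]
  field_simp

end Contact

/-- the ES flux with the Chandrashekar intermediate state has the
contact property: for a stationary contact discontinuity (`u⁻ = u⁺ = v⁻ = v⁺ = 0`,
`p⁻ = p⁺`, arbitrary positive densities) the flux equals the exact flux `(0, p, 0, 0)`.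
The intermediate state has `u_int = v_int = 0`, `p_int = p̄`, `ρ_int = 2 p_int β̂`
(so its conserved representation is `(ρ_int, 0, 0, p_int/(γ−1))`). -/
theorem es_flux_contact_property (γ : ℝ) (hγ : 1 < γ)
    (qm qp : EulerState) (hm : admissible γ qm) (hp : admissible γ qp)
    (hum : uvel qm = 0) (hup : uvel qp = 0)
    (hvm : vvel qm = 0) (hvp : vvel qp = 0)
    (hpp : pres γ qm = pres γ qp) :
    chandrashekarFlux γ qm qp
      - (1 / 2 : ℝ) •
        (Qmat γ
          (lamRoe γ
            ![2 * ((pres γ qm + pres γ qp) / 2) * logMean (betaCoef γ qm) (betaCoef γ qp),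
              0, 0, ((pres γ qm + pres γ qp) / 2) / (γ - 1)])
          ![2 * ((pres γ qm + pres γ qp) / 2) * logMean (betaCoef γ qm) (betaCoef γ qp),
            0, 0, ((pres γ qm + pres γ qp) / 2) / (γ - 1)]).mulVec
          (entVar γ qp - entVar γ qm)
      = ![0, pres γ qm, 0, 0] := by
  have hpbar : (pres γ qm + pres γ qp) / 2 = pres γ qm := by rw [← hpp]; ring
  have hint :
      ![2 * pres γ qm * logMean (betaCoef γ qm) (betaCoef γ qp), 0, 0, pres γ qm / (γ - 1)] =
        restState γ (2 * pres γ qm * logMean (betaCoef γ qm) (betaCoef γ qp)) (pres γ qm) :=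
    rfl
  rw [hpbar, hint, entVar_sub_of_contact hm hp hum hup hvm hvp hpp, mulVec_smul,
    Qmat_lamRoe_restState_mulVec_eq_zero hγ hm.2
      (logMean_pos (betaCoef_pos hm) (betaCoef_pos hp)), smul_zero, smul_zero, sub_zero]
  exact chandrashekarFlux_of_contact hm hp hum hup hvm hvp hpp
end
end

section
/- The map from conserved variables to entropy variables is injective on the admissible states: if q₁ and q₂ are admissible states of the 2D Euler equations with r(q₁) = r(q₂), then q₁ = q₂. -/
open Real Matrix

noncomputable section

/-- the map from conserved variables to entropy variables is injective
on the set of admissible states. -/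
theorem entropy_variables_injective (γ : ℝ) (hγ : 1 < γ)
    (q₁ q₂ : EulerState) (h₁ : admissible γ q₁) (h₂ : admissible γ q₂)
    (hr : entVar γ q₁ = entVar γ q₂) : q₁ = q₂ := by
  obtain ⟨hρ₁, hp₁⟩ := h₁
  obtain ⟨hρ₂, hp₂⟩ := h₂
  have hγ1 : γ - 1 ≠ 0 := by linarith
  -- component equalities
  have e0 := congrFun hr 0
  have e1 := congrFun hr 1
  have e2 := congrFun hr 2
  have e3 := congrFun hr 3
  simp only [entVar, Matrix.cons_val_zero, Matrix.cons_val_one, Matrix.head_cons,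
    Matrix.cons_val_two, Matrix.tail_cons, Matrix.cons_val_three] at e0 e1 e2 e3
  have hβ₁ : 0 < betaCoef γ q₁ := div_pos hρ₁ (by linarith)
  have hβ₂ : 0 < betaCoef γ q₂ := div_pos hρ₂ (by linarith)
  have hβ : betaCoef γ q₁ = betaCoef γ q₂ := by linarith
  rw [hβ] at e1 e2
  have hu : uvel q₁ = uvel q₂ := mul_left_cancel₀ (by positivity) e1
  have hv : vvel q₁ = vvel q₂ := mul_left_cancel₀ (by positivity) e2
  have hs : entS γ q₁ = entS γ q₂ := by
    rw [hβ, hu, hv] at e0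
    have h : (γ - entS γ q₁) / (γ - 1) = (γ - entS γ q₂) / (γ - 1) := by linarith
    rw [div_eq_div_iff (by linarith) (by linarith)] at h
    have := mul_right_cancel₀ hγ1 h
    linarith
  -- rewrite entropy in terms of log ρ and log(2β)
  have key : ∀ q : EulerState, 0 < rho q → 0 < pres γ q →
      entS γ q = (1 - γ) * Real.log (rho q) - Real.log (2 * betaCoef γ q) := by
    intro q hρ hp
    have h2β : 2 * betaCoef γ q = rho q / pres γ q := by
      unfold betaCoef; field_simp
    rw [entS, Real.log_mul hp.ne' (Real.rpow_pos_of_pos hρ _).ne',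
      Real.log_rpow hρ, h2β, Real.log_div hρ.ne' hp.ne']
    ring
  have k₁ := key q₁ hρ₁ hp₁
  have k₂ := key q₂ hρ₂ hp₂
  have hlogρ : Real.log (rho q₁) = Real.log (rho q₂) := by
    rw [k₁, k₂, hβ] at hs
    have : (1 - γ) * Real.log (rho q₁) = (1 - γ) * Real.log (rho q₂) := by linarith
    exact mul_left_cancel₀ (by intro h; apply hγ1; linarith) this
  have hρeq : rho q₁ = rho q₂ := Real.log_injOn_pos (Set.mem_Ioi.mpr hρ₁) (Set.mem_Ioi.mpr hρ₂) hlogρ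
  have hpeq : pres γ q₁ = pres γ q₂ := by
    have h2β : ∀ q : EulerState, 0 < rho q → 0 < pres γ q →
        pres γ q = rho q / (2 * betaCoef γ q) := by
      intro q hρ hp; unfold betaCoef; field_simp
    rw [h2β q₁ hρ₁ hp₁, h2β q₂ hρ₂ hp₂, hβ, hρeq]
  have hm1 : mom1 q₁ = mom1 q₂ := by
    have : mom1 q₁ / rho q₁ = mom1 q₂ / rho q₂ := hu
    rw [hρeq, div_eq_div_iff hρ₂.ne' hρ₂.ne'] at this
    exact mul_right_cancel₀ hρ₂.ne' this
  have hm2 : mom2 q₁ = mom2 q₂ := by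
    have : mom2 q₁ / rho q₁ = mom2 q₂ / rho q₂ := hv
    rw [hρeq, div_eq_div_iff hρ₂.ne' hρ₂.ne'] at this
    exact mul_right_cancel₀ hρ₂.ne' this
  have hE : toten q₁ = toten q₂ := by
    have hp1 : pres γ q₁ = (γ-1) * (toten q₁ - (mom1 q₁ ^ 2 + mom2 q₁ ^ 2)/(2*rho q₁)) := rfl
    have hp2 : pres γ q₂ = (γ-1) * (toten q₂ - (mom1 q₂ ^ 2 + mom2 q₂ ^ 2)/(2*rho q₂)) := rfl
    rw [hp1, hp2, hρeq, hm1, hm2] at hpeq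
    have := mul_left_cancel₀ hγ1 hpeq
    have h := sub_left_injective this
    exact h
  funext i
  fin_cases i
  · exact hρeq
  · exact hm1
  · exact hm2
  · exact hE
end
end
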